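/- Let p be an odd prime, let A = 𝔽_p[ξ₁, ξ₂, …] be the polynomial ring over ZMod p in variables ξ(k) for k ≥ 1, and set ξ(0) = 1. Define the conjugates ξ̄ : ℕ → A recursively by ξ̄(0) = 1 and, for k ≥ 1, ∑_{j=0}^{k} ξ(k−j)^{p^j} · ξ̄(j) = 0 (Milnor's antipode recursion). Define t : ℕ → A by t(n) = ξ(k) if n = p^k − 1 for some k ≥ 1, and t(n) = 0 otherwise, and let N be the Newton sequence of t. Then for every k ≥ 1, N(p^k − 1) = −ξ̄(k). -/

import Mathlib

/-!
Let `E = 1 + ∑_{n ≥ 1} tₙ Xⁿ` and `A = E⁻¹ = ∑ aₙ Xⁿ`. Because `n tₙ = -tₙ` in characteristic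
`p`, the Newton recursion becomes the recursion of `A`, so `N n = (-1)ⁿ⁻¹ aₙ`.
Since `E - 1` lives in degrees `≡ -1 mod p`, the identity `A = A ^ p * E ^ (p - 1)` gives
`a (p m) = (a m) ^ p`. Hence `E * A = 1`, read in degree `p ^ k - 1`, says that
`bₖ = a (p ^ k - 1)` and `ξ` satisfy Milnor's recursion with `ξ` and `ξ̄` in swapped roles.
Composition of additive series `∑ xᵢ T ^ (p ^ i)` is associative, so a one-sided inverse of `ξ` is
two-sided, and `b = ξ̄`.
-/

/-- The Newton sequence of a sequence `t : ℕ → R`: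
`N 0 = 0`, `N 1 = t 1`, and for `n ≥ 2`,
`N n = (∑_{k=1}^{n-1} (-1)^(k-1) * t k * N (n-k)) + (-1)^(n-1) * n * t n`. -/
noncomputable def newton {R : Type*} [CommRing R] (t : ℕ → R) : ℕ → R
  | 0 => 0
  | 1 => t 1
  | n + 2 =>
      (∑ k ∈ (Finset.Icc 1 (n + 1)).attach,
        (-1 : R) ^ ((k : ℕ) - 1) * t (k : ℕ) * newton t (n + 2 - (k : ℕ)))
      + (-1 : R) ^ (n + 1) * ((n + 2 : ℕ) : R) * t (n + 2)
decreasing_by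
  have hk := k.2
  simp only [Finset.mem_Icc] at hk
  omega

open Finset PowerSeries

variable {R : Type*} [CommRing R]

theorem newton_add_two (t : ℕ → R) (n : ℕ) :
    newton t (n + 2) = ∑ k ∈ Icc 1 (n + 1), (-1) ^ (k - 1) * t k * newton t (n + 2 - k)
      + (-1) ^ (n + 1) * ((n + 2 : ℕ) : R) * t (n + 2) := by
  rw [newton, sum_attach (Icc 1 (n + 1)) fun k => (-1 : R) ^ (k - 1) * t k * newton t (n + 2 - k)]

theorem newton_eq_neg_one_pow_mul {t a : ℕ → R} (ha0 : a 0 = 1)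
    (ha : ∀ n, 1 ≤ n → a n + ∑ m ∈ Icc 1 n, t m * a (n - m) = 0)
    (ht : ∀ n, 1 ≤ n → ((n + 1 : ℕ) : R) * t n = 0) (n : ℕ) (hn : 1 ≤ n) :
    newton t n = (-1) ^ (n - 1) * a n := by
  induction n using Nat.strong_induction_on with
  | _ n ih =>
  match n, hn with
  | 1, _ =>
    have h1 := ha 1 le_rfl
    have h2 := ht 1 le_rfl
    simp only [Icc_self, sum_singleton, Nat.sub_self, ha0, mul_one] at h1
    push_cast at h2
    rw [newton]
    linear_combination h2 - h1
  | n + 2, _ =>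
    have hsum : ∑ k ∈ Icc 1 (n + 1), (-1) ^ (k - 1) * t k * newton t (n + 2 - k)
        = (-1) ^ n * ∑ k ∈ Icc 1 (n + 1), t k * a (n + 2 - k) := by
      rw [mul_sum]
      refine sum_congr rfl fun k hk => ?_
      rw [mem_Icc] at hk
      have hsign : (-1 : R) ^ (k - 1) * (-1) ^ (n + 2 - k - 1) = (-1) ^ n := by
        rw [← pow_add]
        congr 1
        omega
      rw [ih (n + 2 - k) (by omega) (by omega)]
      linear_combination (t k * a (n + 2 - k)) * hsign
    have hrec := ha (n + 2) (by omega)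
    have hdead := ht (n + 2) (by omega)
    rw [sum_Icc_succ_top (by omega), Nat.sub_self, ha0, mul_one] at hrec
    rw [newton_add_two, hsum, show n + 2 - 1 = n + 1 by omega]
    push_cast at hdead ⊢
    linear_combination (-1) ^ n * hrec - (-1) ^ n * hdead

theorem Finset.sum_range_pow_eq_sum_pow_sub_one {M : Type*} [AddCommMonoid M] {p : ℕ}
    (hp : 1 < p) {f : ℕ → M} (hf : ∀ m, (∀ j, m ≠ p ^ j - 1) → f m = 0) (k : ℕ) :
    ∑ m ∈ range (p ^ k), f m = ∑ j ∈ range (k + 1), f (p ^ j - 1) := by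
  have hpos : ∀ j, 1 ≤ p ^ j := fun j => Nat.one_le_pow j p (by omega)
  have hinj : Set.InjOn (fun j => p ^ j - 1) (range (k + 1)) := fun i _ j _ hij =>
    Nat.pow_right_injective hp (show p ^ i = p ^ j by
      have := hpos i; have := hpos j; have : p ^ i - 1 = p ^ j - 1 := hij; omega)
  rw [← sum_image hinj]
  refine (sum_subset (fun m hm => ?_) fun m hm hm' => hf m ?_).symm
  · obtain ⟨j, hj, rfl⟩ := mem_image.mp hm
    have := Nat.pow_le_pow_right (by omega : 0 < p) (Nat.lt_succ_iff.mp (mem_range.mp hj))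
    have := hpos j
    exact mem_range.mpr (by omega)
  · rintro j rfl
    refine hm' (mem_image.mpr ⟨j, mem_range.mpr (Nat.lt_succ_of_le ?_), rfl⟩)
    by_contra hjk
    have := Nat.pow_lt_pow_right hp (not_le.mp hjk)
    have := mem_range.mp hm
    omega

namespace PowerSeries

theorem coeff_add_sum_Icc_eq_zero_of_mul_eq_one {t : ℕ → R} {E A : R⟦X⟧} (hEA : E * A = 1)
    (hE0 : coeff 0 E = 1) (hE : ∀ m, 1 ≤ m → coeff m E = t m) {n : ℕ} (hn : 1 ≤ n) :
    coeff n A + ∑ m ∈ Icc 1 n, t m * coeff (n - m) A = 0 := by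
  have h := congrArg (coeff n) hEA
  rw [coeff_mul, Nat.sum_antidiagonal_eq_sum_range_succ (fun i j => coeff i E * coeff j A),
    Nat.succ_eq_add_one, range_eq_Ico, Ico_add_one_right_eq_Icc,
    ← add_sum_Ioc_eq_sum_Icc (Nat.zero_le n), ← Icc_add_one_left_eq_Ioc, zero_add, hE0, one_mul,
    Nat.sub_zero, coeff_one, if_neg (by omega)] at h
  rwa [sum_congr rfl fun m hm => by rw [hE m (mem_Icc.mp hm).1]] at h

theorem coeff_pow_eq_zero_of_not_dvd_add {p : ℕ} {V : R⟦X⟧}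
    (hV : ∀ n, ¬ p ∣ n + 1 → coeff n V = 0) (s : ℕ) {n : ℕ} (h : ¬ p ∣ n + s) :
    coeff n (V ^ s) = 0 := by
  induction s generalizing n with
  | zero =>
    rw [pow_zero, coeff_one, if_neg]
    rintro rfl
    exact h (dvd_zero p)
  | succ s ih =>
    rw [pow_succ', coeff_mul]
    refine sum_eq_zero fun ij hij => ?_
    rw [HasAntidiagonal.mem_antidiagonal] at hij
    by_cases hi : p ∣ ij.1 + 1
    · rw [ih fun hj => h ?_, mul_zero]
      rw [← hij, show ij.1 + ij.2 + (s + 1) = ij.1 + 1 + (ij.2 + s) by ring]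
      exact dvd_add hi hj
    · rw [hV _ hi, zero_mul]

variable {p : ℕ} [ExpChar R p]

theorem coeff_pow_expChar (g : R⟦X⟧) (n : ℕ) :
    coeff n (g ^ p) = if p ∣ n then coeff (n / p) g ^ p else 0 := by
  have hn : n < n + 1 := n.lt_succ_self
  rw [← coeff_coe_trunc_of_lt hn, ← trunc_trunc_pow, coeff_coe_trunc_of_lt hn,
    ← Polynomial.coe_pow, Polynomial.coeff_coe, ← Polynomial.map_frobenius_expand,
    Polynomial.coeff_map, Polynomial.coeff_expand (expChar_pos R p)]
  split_ifs with h
  · rw [frobenius_def, ← Polynomial.coeff_coe,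
      coeff_coe_trunc_of_lt ((Nat.div_le_self n p).trans_lt hn)]
  · exact map_zero _

theorem coeff_mul_eq_pow_of_mul_eq_one {E A : R⟦X⟧} (hEA : E * A = 1)
    (hE : ∀ n, ¬ p ∣ n + 1 → coeff n (E - 1) = 0) (m : ℕ) :
    coeff (p * m) A = coeff m A ^ p := by
  have hp := expChar_pos R p
  have hA : A = A ^ p * E ^ (p - 1) := calc
    A = A * (E * A) ^ (p - 1) := by rw [hEA, one_pow, mul_one]
    _ = A ^ (p - 1 + 1) * E ^ (p - 1) := by ring
    _ = A ^ p * E ^ (p - 1) := by rw [Nat.sub_add_cancel hp]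
  -- `E ^ (p - 1) - 1 = ∑_{0 < s < p} (p - 1).choose s * (E - 1) ^ s`, and `(E - 1) ^ s` lives in
  -- degrees `≡ -s mod p`
  have hEpow : ∀ j, p ∣ j → coeff j (E ^ (p - 1) - 1) = 0 := by
    intro j hj
    rw [← sub_add_cancel E 1, add_pow, sum_range_succ', map_sub, map_add, map_sum]
    simp only [pow_zero, one_pow, mul_one, Nat.choose_zero_right, Nat.cast_one,
      add_sub_cancel_right]
    refine sum_eq_zero fun s hs => ?_
    rw [← map_natCast (C (R := R)), coeff_mul_C, coeff_pow_eq_zero_of_not_dvd_add hE, zero_mul]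
    rw [mem_range] at hs
    intro hdvd
    exact Nat.not_dvd_of_pos_of_lt s.succ_pos (by omega) ((Nat.dvd_add_right hj).mp hdvd)
  calc coeff (p * m) A = coeff (p * m) (A ^ p * (E ^ (p - 1) - 1)) + coeff (p * m) (A ^ p) := by
        rw [← map_add, mul_sub, mul_one, sub_add_cancel, ← hA]
    _ = coeff m A ^ p := by
        rw [coeff_pow_expChar, if_pos (dvd_mul_right p m), Nat.mul_div_cancel_left m hp,
          coeff_mul, sum_eq_zero, zero_add]
        rintro ⟨i, j⟩ hij
        rw [HasAntidiagonal.mem_antidiagonal] at hij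
        by_cases hi : p ∣ i
        · rw [hEpow j ((Nat.dvd_add_right hi).mp (hij ▸ dvd_mul_right p m)), mul_zero]
        · rw [coeff_pow_expChar, if_neg hi, zero_mul]

theorem coeff_pow_mul_eq_pow_of_mul_eq_one {E A : R⟦X⟧} (hEA : E * A = 1)
    (hE : ∀ n, ¬ p ∣ n + 1 → coeff n (E - 1) = 0) (i m : ℕ) :
    coeff (p ^ i * m) A = coeff m A ^ p ^ i := by
  induction i with
  | zero => simp
  | succ i ih =>
    rw [pow_succ', mul_assoc, coeff_mul_eq_pow_of_mul_eq_one hEA hE, ih, ← pow_mul, mul_comm]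

end PowerSeries

-- `frobeniusComp p x y` is the coefficient sequence of the composite `g ∘ f` of the additive
-- power series `f = ∑ xᵢ T ^ (p ^ i)` and `g = ∑ yⱼ T ^ (p ^ j)`.
def frobeniusComp (p : ℕ) (x y : ℕ → R) (k : ℕ) : R :=
  ∑ ij ∈ antidiagonal k, x ij.1 ^ p ^ ij.2 * y ij.2

section frobeniusComp

variable {p : ℕ}

theorem frobeniusComp_eq_sum_range (x y : ℕ → R) (k : ℕ) :
    frobeniusComp p x y k = ∑ j ∈ range (k + 1), x (k - j) ^ p ^ j * y j := by
  rw [frobeniusComp, ← Nat.sum_antidiagonal_swap]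
  exact Nat.sum_antidiagonal_eq_sum_range_succ (fun j i => x i ^ p ^ j * y j) k

theorem frobeniusComp_eq_single_of_sum_range_eq_zero {x y : ℕ → R} (hx : x 0 = 1) (hy : y 0 = 1)
    (hxy : ∀ k, 1 ≤ k → ∑ j ∈ range (k + 1), x (k - j) ^ p ^ j * y j = 0) :
    frobeniusComp p x y = Pi.single 0 1 := by
  funext k
  rcases Nat.eq_zero_or_pos k with rfl | hk
  · simp [frobeniusComp_eq_sum_range, hx, hy]
  · rw [frobeniusComp_eq_sum_range, hxy k hk, Pi.single_eq_of_ne hk.ne']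

theorem frobeniusComp_single_zero_one_right (x : ℕ → R) :
    frobeniusComp p x (Pi.single 0 1) = x := by
  funext k
  rw [frobeniusComp, sum_eq_single (k, 0)]
  · simp
  · rintro ⟨i, j⟩ hij hne
    obtain rfl | hj := eq_or_ne j 0
    · simp_all
    · simp [hj]
  · simp

variable [ExpChar R p]

theorem frobeniusComp_single_zero_one_left (y : ℕ → R) :
    frobeniusComp p (Pi.single 0 1) y = y := by
  funext k
  rw [frobeniusComp, sum_eq_single (0, k)]
  · simp
  · rintro ⟨i, j⟩ hij hne
    obtain rfl | hi := eq_or_ne i 0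
    · simp_all
    · simp [hi, (expChar_pos R p).ne']
  · simp

theorem frobeniusComp_assoc (x y z : ℕ → R) :
    frobeniusComp p (frobeniusComp p x y) z = frobeniusComp p x (frobeniusComp p y z) := by
  funext k
  simp only [frobeniusComp, sum_pow_char_pow, sum_mul, mul_sum, sum_sigma']
  refine sum_nbij' (fun ⟨⟨_, b⟩, ⟨i, j⟩⟩ => ⟨(i, j + b), (j, b)⟩)
    (fun ⟨⟨i, _⟩, ⟨j, b⟩⟩ => ⟨(i + j, b), (i, j)⟩) ?_ ?_ ?_ ?_
    fun ⟨_, ⟨i, j⟩⟩ _ => by rw [mul_pow, ← pow_mul, ← pow_add, mul_assoc]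
  all_goals aesop (add simp add_assoc)

theorem eq_of_frobeniusComp_eq_single {b x y : ℕ → R}
    (hbx : frobeniusComp p b x = Pi.single 0 1) (hxy : frobeniusComp p x y = Pi.single 0 1) :
    b = y := by
  rw [← frobeniusComp_single_zero_one_right b, ← hxy, ← frobeniusComp_assoc, hbx,
    frobeniusComp_single_zero_one_left]

theorem frobeniusComp_coeff_pow_sub_one_eq_single (hp : 1 < p) {ξ : ℕ → R} {E A : R⟦X⟧}
    (hEA : E * A = 1) (hξ0 : ξ 0 = 1) (hE : ∀ j, coeff (p ^ j - 1) E = ξ j)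
    (hE0 : ∀ m, (∀ j, m ≠ p ^ j - 1) → coeff m E = 0) :
    frobeniusComp p (fun i => coeff (p ^ i - 1) A) ξ = Pi.single 0 1 := by
  have hpos : ∀ j, 1 ≤ p ^ j := fun j => Nat.one_le_pow j p (by omega)
  have hsupp : ∀ n, ¬ p ∣ n + 1 → coeff n (E - 1) = 0 := by
    intro n hn
    rw [map_sub, coeff_one]
    by_cases h : ∃ j, n = p ^ j - 1
    · obtain ⟨_ | j, rfl⟩ := h
      · simpa [hξ0, sub_eq_zero] using hE 0
      · exact absurd (by rw [Nat.sub_add_cancel (hpos _)]; exact dvd_pow_self p j.succ_ne_zero) hn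
    · push Not at h
      rw [hE0 n h, if_neg (by simpa using h 0), sub_zero]
  funext k
  calc frobeniusComp p (fun i => coeff (p ^ i - 1) A) ξ k
      = ∑ j ∈ range (k + 1), coeff (p ^ j - 1) E * coeff (p ^ k - 1 - (p ^ j - 1)) A := by
        rw [frobeniusComp_eq_sum_range]
        refine sum_congr rfl fun j hj => ?_
        have hjk := Nat.lt_succ_iff.mp (mem_range.mp hj)
        have hsplit : p ^ j * (p ^ (k - j) - 1) = p ^ k - 1 - (p ^ j - 1) := by
          rw [Nat.mul_sub, mul_one, ← pow_add, Nat.add_sub_cancel' hjk]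
          have := hpos j
          omega
        rw [hE, ← coeff_pow_mul_eq_pow_of_mul_eq_one hEA hsupp, hsplit, mul_comm]
    _ = ∑ m ∈ range (p ^ k), coeff m E * coeff (p ^ k - 1 - m) A :=
        (sum_range_pow_eq_sum_pow_sub_one (f := fun m => coeff m E * coeff (p ^ k - 1 - m) A) hp
          (fun m hm => by rw [hE0 m hm, zero_mul]) k).symm
    _ = coeff (p ^ k - 1) (E * A) := by
        rw [coeff_mul, Nat.sum_antidiagonal_eq_sum_range_succ fun i j => coeff i E * coeff j A,
          Nat.succ_eq_add_one, Nat.sub_add_cancel (hpos k)]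
    _ = (Pi.single 0 1 : ℕ → R) k := by
        rw [hEA, coeff_one, Pi.single_apply]
        refine if_congr ⟨fun h => ?_, fun h => by simp [h]⟩ rfl rfl
        by_contra hk
        have := Nat.one_lt_pow hk hp
        omega

end frobeniusComp

theorem natCast_add_one_mul_eq_zero {p : ℕ} [CharP R p] (hp : p ≠ 0) {t : ℕ → R}
    (ht0 : ∀ n, (∀ k, 1 ≤ k → n ≠ p ^ k - 1) → t n = 0) (n : ℕ) :
    ((n + 1 : ℕ) : R) * t n = 0 := by
  by_cases h : ∃ k, 1 ≤ k ∧ n = p ^ k - 1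
  · obtain ⟨k, hk, rfl⟩ := h
    rw [Nat.sub_add_cancel (Nat.one_le_pow k p (by omega)), Nat.cast_pow, CharP.cast_eq_zero,
      zero_pow (by omega), zero_mul]
  · push Not at h
    rw [ht0 n fun k hk => h k hk, mul_zero]

theorem neg_one_pow_pow_sub_two (p : ℕ) [Fact p.Prime] [CharP R p] {k : ℕ} (hk : 2 ≤ p ^ k) :
    (-1 : R) ^ (p ^ k - 2) = -1 := calc
  (-1 : R) ^ (p ^ k - 2) = (-1) ^ (p ^ k - 2) * (-1) ^ 2 := by simp
  _ = (-1) ^ p ^ k := by rw [← pow_add, Nat.sub_add_cancel hk]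
  _ = -1 := neg_one_pow_char_pow R p k

open MvPolynomial in
theorem newton_eq_neg_conjugate_xi_general (p : ℕ) (hp : p.Prime)
    (ξ : ℕ → MvPolynomial ℕ+ (ZMod p)) (hξ0 : ξ 0 = 1)
    (ξbar : ℕ → MvPolynomial ℕ+ (ZMod p)) (hξbar0 : ξbar 0 = 1)
    (hξbar : ∀ k : ℕ, 1 ≤ k →
      ∑ j ∈ Finset.range (k + 1), ξ (k - j) ^ (p ^ j) * ξbar j = 0)
    (t : ℕ → MvPolynomial ℕ+ (ZMod p))
    (ht1 : ∀ k : ℕ, 1 ≤ k → t (p ^ k - 1) = ξ k)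
    (ht0 : ∀ n : ℕ, (∀ k : ℕ, 1 ≤ k → n ≠ p ^ k - 1) → t n = 0) :
    ∀ k : ℕ, 1 ≤ k → newton t (p ^ k - 1) = - ξbar k := by
  have : Fact p.Prime := ⟨hp⟩
  have hpk : ∀ k, 1 ≤ k → 2 ≤ p ^ k := fun k hk => hp.two_le.trans (Nat.le_self_pow (by omega) p)
  set E := PowerSeries.mk fun n => if n = 0 then 1 else t n
  set A := invOfUnit E 1
  have hEA : E * A = 1 := mul_invOfUnit _ _ (by simp [E])
  have hE : ∀ j, PowerSeries.coeff (p ^ j - 1) E = ξ j := by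
    rintro (_ | j)
    · simp [E, hξ0]
    · have := hpk (j + 1) (by omega)
      simp [E, show p ^ (j + 1) - 1 ≠ 0 by omega, ht1 (j + 1) (by omega)]
  have hE0 : ∀ m, (∀ j, m ≠ p ^ j - 1) → PowerSeries.coeff m E = 0 := fun m hm => by
    simp [E, show m ≠ 0 by simpa using hm 0, ht0 m fun k _ => hm k]
  have hconj : (fun i => PowerSeries.coeff (p ^ i - 1) A) = ξbar :=
    eq_of_frobeniusComp_eq_single
      (frobeniusComp_coeff_pow_sub_one_eq_single hp.one_lt hEA hξ0 hE hE0)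
      (frobeniusComp_eq_single_of_sum_range_eq_zero hξ0 hξbar0 hξbar)
  intro k hk
  rw [newton_eq_neg_one_pow_mul (by simp [A, E])
      (fun n => coeff_add_sum_Icc_eq_zero_of_mul_eq_one hEA (by simp [E])
        fun m hm => by simp [E, show m ≠ 0 by omega])
      (fun n _ => natCast_add_one_mul_eq_zero hp.ne_zero ht0 n) _ (by have := hpk k hk; omega),
    congrFun hconj k, Nat.sub_sub, neg_one_pow_pow_sub_two p (hpk k hk), neg_one_mul]

open MvPolynomial in
/-- In `A = 𝔽_p[ξ₁, ξ₂, …]` (formally `MvPolynomial ℕ+ (ZMod p)`, `p` an odd prime)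
with `ξ 0 = 1` and `ξ k = X k` for `k ≥ 1`, let `ξbar` be the conjugates, defined by
`ξbar 0 = 1` and Milnor's antipode recursion `∑_{j=0}^k ξ (k-j) ^ (p^j) * ξbar j = 0`
for `k ≥ 1`.  Let `t n = ξ k` if `n = p^k - 1` for some `k ≥ 1` and `t n = 0`
otherwise.  Then the Newton sequence of `t` satisfies `N (p^k - 1) = - ξbar k`
for all `k ≥ 1`. -/
theorem newton_eq_neg_conjugate_xi (p : ℕ) (hp : p.Prime) (hodd : Odd p)
    (ξ : ℕ → MvPolynomial ℕ+ (ZMod p)) (hξ0 : ξ 0 = 1)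
    (hξ : ∀ k : ℕ+, ξ k = X k)
    (ξbar : ℕ → MvPolynomial ℕ+ (ZMod p)) (hξbar0 : ξbar 0 = 1)
    (hξbar : ∀ k : ℕ, 1 ≤ k →
      ∑ j ∈ Finset.range (k + 1), ξ (k - j) ^ (p ^ j) * ξbar j = 0)
    (t : ℕ → MvPolynomial ℕ+ (ZMod p))
    (ht1 : ∀ k : ℕ, 1 ≤ k → t (p ^ k - 1) = ξ k)
    (ht0 : ∀ n : ℕ, (∀ k : ℕ, 1 ≤ k → n ≠ p ^ k - 1) → t n = 0) :
    ∀ k : ℕ, 1 ≤ k → newton t (p ^ k - 1) = - ξbar k :=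
  newton_eq_neg_conjugate_xi_general p hp ξ hξ0 ξbar hξbar0 hξbar t ht1 ht0
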